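/- The transformed propagation Jacobian T_k F_{k-1} T_{k-1}⁻¹ for two robots is block upper-triangular when the correction terms Δ vanish: if p̂_{i,k|k} = p̂_{i,k|k-1} for both robots, then the (observable-row, unobservable-column) off-diagonal blocks of T_k F_{k-1} T_{k-1}⁻¹ in the orientation column are zero. -/

import Mathlib

open Matrix

def J : Matrix (Fin 3) (Fin 3) ℝ := !![0,-1,0; 1,0,0; 0,0,0]

/-- The 8×8 Kalman-decomposition transformation matrix for n = 2 robots. -/
def T (p₁ p₂ : Fin 3 → ℝ) : Matrix (Fin 8) (Fin 8) ℝ :=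
  !![1,0,0, (J *ᵥ (p₂ - p₁)) 0, -1, 0, 0, 0;
     0,1,0, (J *ᵥ (p₂ - p₁)) 1,  0,-1, 0, 0;
     0,0,1, (J *ᵥ (p₂ - p₁)) 2,  0, 0,-1, 0;
     0,0,0, -1,                  0, 0, 0, 1;
     0,0,0,  1,                  0, 0, 0, 0;
     1,0,0,  0,                  0, 0, 0, 0;
     0,1,0,  0,                  0, 0, 0, 0;
     0,0,1,  0,                  0, 0, 0, 0]

/-- Two-robot block-diagonal propagation Jacobian
`blockdiag([[I₃, Jδ₁],[0,1]], [[I₃, Jδ₂],[0,1]])`. -/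
def F2 (δ₁ δ₂ : Fin 3 → ℝ) : Matrix (Fin 8) (Fin 8) ℝ :=
  !![1,0,0, (J *ᵥ δ₁) 0, 0,0,0, 0;
     0,1,0, (J *ᵥ δ₁) 1, 0,0,0, 0;
     0,0,1, (J *ᵥ δ₁) 2, 0,0,0, 0;
     0,0,0, 1,           0,0,0, 0;
     0,0,0, 0,           1,0,0, (J *ᵥ δ₂) 0;
     0,0,0, 0,           0,1,0, (J *ᵥ δ₂) 1;
     0,0,0, 0,           0,0,1, (J *ᵥ δ₂) 2;
     0,0,0, 0,           0,0,0, 1]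

def Tinv (p₁ p₂ : Fin 3 → ℝ) : Matrix (Fin 8) (Fin 8) ℝ :=
  !![ 0, 0, 0, 0, 0,                   1, 0, 0;
      0, 0, 0, 0, 0,                   0, 1, 0;
      0, 0, 0, 0, 0,                   0, 0, 1;
      0, 0, 0, 0, 1,                   0, 0, 0;
     -1, 0, 0, 0, (J *ᵥ (p₂ - p₁)) 0, 1, 0, 0;
      0,-1, 0, 0, (J *ᵥ (p₂ - p₁)) 1, 0, 1, 0;
      0, 0,-1, 0, (J *ᵥ (p₂ - p₁)) 2, 0, 0, 1;
      0, 0, 0, 1, 1,                   0, 0, 0]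

theorem T_mul_Tinv (p₁ p₂ : Fin 3 → ℝ) : T p₁ p₂ * Tinv p₁ p₂ = 1 := by
  unfold T Tinv
  generalize J *ᵥ (p₂ - p₁) = a
  ext i j
  fin_cases i <;> fin_cases j <;> simp [mul_apply, Fin.sum_univ_succ]

theorem inv_T (p₁ p₂ : Fin 3 → ℝ) : (T p₁ p₂)⁻¹ = Tinv p₁ p₂ :=
  inv_eq_right_inv (T_mul_Tinv p₁ p₂)

/-- Closed form of `T_k F_{k-1} T_{k-1}⁻¹`; coordinates `0, …, 3` are the observable ones,
`4, …, 7` the unobservable ones. -/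
def transformedF2 (b c e : Fin 3 → ℝ) : Matrix (Fin 8) (Fin 8) ℝ :=
  !![1, 0, 0, -c 0, e 0, 0, 0, 0;
     0, 1, 0, -c 1, e 1, 0, 0, 0;
     0, 0, 1, -c 2, e 2, 0, 0, 0;
     0, 0, 0,  1,   0,   0, 0, 0;
     0, 0, 0,  0,   1,   0, 0, 0;
     0, 0, 0,  0,   b 0, 1, 0, 0;
     0, 0, 0,  0,   b 1, 0, 1, 0;
     0, 0, 0,  0,   b 2, 0, 0, 1]

theorem transformedF2_apply_eq_zero (b c : Fin 3 → ℝ) {i j : Fin 8} (hi : (i : ℕ) < 4)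
    (hj : 4 ≤ (j : ℕ)) : transformedF2 b c 0 i j = 0 := by
  fin_cases i <;> fin_cases j <;> simp_all [transformedF2]

theorem T_mul_F2_mul_Tinv (p₁ p₂ r₁ r₂ δ₁ δ₂ : Fin 3 → ℝ) :
    T p₁ p₂ * F2 δ₁ δ₂ * Tinv r₁ r₂ =
      transformedF2 (J *ᵥ δ₁) (J *ᵥ δ₂) (J *ᵥ (δ₁ + (p₂ - p₁) - (r₂ - r₁) - δ₂)) := by
  rw [show J *ᵥ (δ₁ + (p₂ - p₁) - (r₂ - r₁) - δ₂)
      = J *ᵥ δ₁ + J *ᵥ (p₂ - p₁) - J *ᵥ (r₂ - r₁) - J *ᵥ δ₂ by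
    simp only [mulVec_add, mulVec_sub]]
  unfold T F2 Tinv transformedF2
  generalize J *ᵥ δ₁ = b
  generalize J *ᵥ δ₂ = c
  generalize J *ᵥ (p₂ - p₁) = a
  generalize J *ᵥ (r₂ - r₁) = d
  simp [sub_eq_add_neg, add_assoc]

/-- With `δᵢ = p̂_{i,k|k-1} - p̂_{i,k-1|k-1}`, the coupling column is `-Δ₂₁`. -/
theorem T_mul_F2_mul_inv_T (r₁ r₂ q₁ q₂ s₁ s₂ : Fin 3 → ℝ) :
    T s₁ s₂ * F2 (q₁ - r₁) (q₂ - r₂) * (T r₁ r₂)⁻¹ =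
      transformedF2 (J *ᵥ (q₁ - r₁)) (J *ᵥ (q₂ - r₂)) (-(J *ᵥ ((q₂ - s₂) - (q₁ - s₁)))) := by
  rw [inv_T, T_mul_F2_mul_Tinv, ← mulVec_neg]
  congr 2
  abel

theorem stmt_18
    (r₁ r₂ : Fin 3 → ℝ)   -- estimates p̂_{i,k-1|k-1}
    (q₁ q₂ : Fin 3 → ℝ)   -- predictions p̂_{i,k|k-1}
    (s₁ s₂ : Fin 3 → ℝ)   -- updated estimates p̂_{i,k|k}
    (h₁ : s₁ = q₁) (h₂ : s₂ = q₂) :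
    J *ᵥ ((q₂ - s₂) - (q₁ - s₁)) = 0 ∧
    ∀ (i j : Fin 8), (i : ℕ) < 4 → 4 ≤ (j : ℕ) →
      (T s₁ s₂ * F2 (q₁ - r₁) (q₂ - r₂) * (T r₁ r₂)⁻¹) i j = 0 := by
  have hΔ : J *ᵥ ((q₂ - s₂) - (q₁ - s₁)) = 0 := by simp [h₁, h₂]
  refine ⟨hΔ, fun i j hi hj => ?_⟩
  rw [T_mul_F2_mul_inv_T, hΔ, neg_zero]
  exact transformedF2_apply_eq_zero _ _ hi hj
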